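/- Let p ≥ 1, B₁ < B₂ reals, B = [B₁,B₂]^p ⊆ ℝ^p, and let W : ℝ^p → ℝ be differentiable and σ-strongly concave on B with σ > 0. Let β* ∈ B be a maximizer of W over B, let β ∈ B and α > 0, and let P be the coordinatewise projection onto the box B. Then ‖P(β + α∇W(β)) − β*‖² ≤ (1 − 2σα)·‖β − β*‖² + α²·‖∇W(β)‖², where ‖·‖ is the Euclidean norm. -/

import Mathlib

/-- The box `[B₁, B₂]^p` in `ℝ^p`. -/
def box (p : ℕ) (B₁ B₂ : ℝ) : Set (EuclideanSpace ℝ (Fin p)) :=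
  {x | ∀ i, x i ∈ Set.Icc B₁ B₂}

/-- Coordinatewise projection onto the box `[B₁, B₂]^p`: `(P x) i = min B₂ (max B₁ (x i))`. -/
noncomputable def boxProj (p : ℕ) (B₁ B₂ : ℝ) (x : EuclideanSpace ℝ (Fin p)) :
    EuclideanSpace ℝ (Fin p) :=
  (WithLp.equiv 2 (Fin p → ℝ)).symm fun i => min B₂ (max B₁ (x i))

/-- `W` is `σ`-strongly concave on `S`. -/
def PaperStrongConcaveOn {p : ℕ} (S : Set (EuclideanSpace ℝ (Fin p))) (σ : ℝ)
    (W : EuclideanSpace ℝ (Fin p) → ℝ) : Prop :=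
  ∀ x ∈ S, ∀ y ∈ S, ∀ t ∈ Set.Icc (0 : ℝ) 1,
    t * W x + (1 - t) * W y + σ / 2 * t * (1 - t) * ‖x - y‖ ^ 2 ≤ W (t • x + (1 - t) • y)

/-!
Strong concavity gives two first-order facts: the gradient inequality
`W β* - W β + σ/2 ‖β* - β‖² ≤ ⟪∇W β, β* - β⟫`, and, since `β*` maximizes `W`, the quadratic
growth bound `σ/2 ‖β - β*‖² ≤ W β* - W β`. Both come from the strong-concavity inequality on a
segment, divided by the step `t` and letting `t → 0⁺`. Adding them gives
`σ ‖β - β*‖² ≤ ⟪∇W β, β* - β⟫`, and expanding `‖β + α ∇W β - β*‖²` gives the bound before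
projecting. The projection onto the box is a coordinatewise clamp, which moves no coordinate
farther from the corresponding coordinate of `β*`, a point of the box.
-/

open Filter Topology RealInnerProductSpace

lemma add_le_of_forall_add_one_sub_mul_le {a c L : ℝ} {g : ℝ → ℝ}
    (hg : Tendsto g (𝓝[>] 0) (𝓝 L)) (h : ∀ t ∈ Set.Ioo (0 : ℝ) 1, a + (1 - t) * c ≤ g t) :
    a + c ≤ L := by
  have hlim : Tendsto (fun t : ℝ => a + (1 - t) * c) (𝓝[>] 0) (𝓝 (a + c)) := by
    simpa using ((by fun_prop : Continuous fun t : ℝ => a + (1 - t) * c).tendsto 0).mono_left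
      nhdsWithin_le_nhds
  refine le_of_tendsto_of_tendsto hlim hg ?_
  filter_upwards [Ioo_mem_nhdsGT one_pos] with t ht using h t ht

section StrongConcavity

variable {E : Type*} [NormedAddCommGroup E] {s : Set E} {m : ℝ} {f : E → ℝ} {x y : E}

section NormedSpace

variable [NormedSpace ℝ E]

theorem StrongConcaveOn.mul_sub_add_le_sub (hf : StrongConcaveOn s m f) (hx : x ∈ s)
    (hy : y ∈ s) {t : ℝ} (ht₀ : 0 ≤ t) (ht₁ : t ≤ 1) :
    t * (f x - f y + (1 - t) * (m / 2 * ‖x - y‖ ^ 2)) ≤ f (y + t • (x - y)) - f y := by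
  have h := hf.2 hx hy ht₀ (sub_nonneg.2 ht₁) (add_sub_cancel t 1)
  rw [show t • x + (1 - t) • y = y + t • (x - y) by module, smul_eq_mul, smul_eq_mul] at h
  linarith

theorem StrongConcaveOn.sq_norm_sub_le_of_isMaxOn (hf : StrongConcaveOn s m f) (hx : x ∈ s)
    (hy : y ∈ s) (hmax : IsMaxOn f s y) :
    m / 2 * ‖x - y‖ ^ 2 ≤ f y - f x := by
  suffices f x - f y + m / 2 * ‖x - y‖ ^ 2 ≤ 0 by linarith
  refine add_le_of_forall_add_one_sub_mul_le tendsto_const_nhds fun t ⟨ht₀, ht₁⟩ => ?_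
  have hmem : y + t • (x - y) ∈ s := hf.1.add_smul_sub_mem hy hx ⟨ht₀.le, ht₁.le⟩
  have h := hf.mul_sub_add_le_sub hx hy ht₀.le ht₁.le
  exact nonpos_of_mul_nonpos_right (h.trans (sub_nonpos.2 (hmax hmem))) ht₀

end NormedSpace

variable [InnerProductSpace ℝ E] [CompleteSpace E]

theorem StrongConcaveOn.sub_add_sq_norm_le_inner_gradient (hf : StrongConcaveOn s m f) (hx : x ∈ s)
    (hy : y ∈ s) (hdiff : DifferentiableAt ℝ f y) :
    f x - f y + m / 2 * ‖x - y‖ ^ 2 ≤ ⟪gradient f y, x - y⟫ := by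
  have hderiv : HasDerivAt (fun t : ℝ => f (y + t • (x - y))) ⟪gradient f y, x - y⟫ 0 := by
    have := hdiff.hasGradientAt.hasFDerivAt.hasLineDerivAt (x - y)
    rwa [InnerProductSpace.toDual_apply_apply] at this
  have hslope := (hasDerivAt_iff_tendsto_slope.1 hderiv).mono_left (nhdsGT_le_nhdsNE 0)
  refine add_le_of_forall_add_one_sub_mul_le hslope fun t ⟨ht₀, ht₁⟩ => ?_
  rw [slope_def_field, sub_zero, zero_smul, add_zero, le_div_iff₀ ht₀]
  linarith [hf.mul_sub_add_le_sub hx hy ht₀.le ht₁.le]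

theorem StrongConcaveOn.mul_sq_norm_sub_le_inner_gradient_of_isMaxOn
    (hf : StrongConcaveOn s m f) (hx : x ∈ s) (hy : y ∈ s) (hdiff : DifferentiableAt ℝ f x)
    (hmax : IsMaxOn f s y) :
    m * ‖x - y‖ ^ 2 ≤ ⟪gradient f x, y - x⟫ := by
  have hgrad := hf.sub_add_sq_norm_le_inner_gradient hy hx hdiff
  have hgrowth := hf.sq_norm_sub_le_of_isMaxOn hx hy hmax
  rw [norm_sub_rev] at hgrad
  linarith

end StrongConcavity

theorem norm_add_smul_sub_sq_le {E : Type*} [NormedAddCommGroup E] [InnerProductSpace ℝ E]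
    {x y g : E} {m α : ℝ} (hα : 0 ≤ α) (h : m * ‖x - y‖ ^ 2 ≤ ⟪g, y - x⟫) :
    ‖x + α • g - y‖ ^ 2 ≤ (1 - 2 * m * α) * ‖x - y‖ ^ 2 + α ^ 2 * ‖g‖ ^ 2 := by
  have hinner : ⟪x - y, g⟫ = -⟪g, y - x⟫ := by
    rw [real_inner_comm, ← inner_neg_right, neg_sub]
  rw [show x + α • g - y = (x - y) + α • g by abel, norm_add_sq_real, real_inner_smul_right,
    norm_smul, Real.norm_of_nonneg hα, hinner]
  nlinarith [mul_le_mul_of_nonneg_left h hα]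

theorem convex_box (p : ℕ) (B₁ B₂ : ℝ) : Convex ℝ (box p B₁ B₂) :=
  fun _ hx _ hy _ _ ha hb hab i => by
    simpa using convex_Icc B₁ B₂ (hx i) (hy i) ha hb hab

theorem PaperStrongConcaveOn.strongConcaveOn {p : ℕ} {S : Set (EuclideanSpace ℝ (Fin p))}
    {σ : ℝ} {W : EuclideanSpace ℝ (Fin p) → ℝ} (hS : Convex ℝ S)
    (hW : PaperStrongConcaveOn S σ W) : StrongConcaveOn S σ W := by
  refine ⟨hS, fun x hx y hy a b ha hb hab => ?_⟩
  obtain rfl : b = 1 - a := by linarith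
  have h := hW x hx y hy a ⟨ha, by linarith⟩
  simp only [smul_eq_mul]
  linarith

theorem abs_min_max_sub_le {B₁ B₂ a b : ℝ} (hb : b ∈ Set.Icc B₁ B₂) :
    |min B₂ (max B₁ a) - b| ≤ |a - b| := by
  obtain ⟨h₁, h₂⟩ := hb
  calc |min B₂ (max B₁ a) - b| = |min B₂ (max B₁ a) - min B₂ (max B₁ b)| := by
        rw [max_eq_right h₁, min_eq_right h₂]
    _ ≤ |max B₁ a - max B₁ b| := by
        simpa using abs_min_sub_min_le_max B₂ (max B₁ a) B₂ (max B₁ b)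
    _ ≤ |a - b| := by simpa only [max_comm B₁] using abs_max_sub_max_le_abs a b B₁

theorem norm_boxProj_sub_le {p : ℕ} {B₁ B₂ : ℝ} (x : EuclideanSpace ℝ (Fin p))
    {z : EuclideanSpace ℝ (Fin p)} (hz : z ∈ box p B₁ B₂) :
    ‖boxProj p B₁ B₂ x - z‖ ≤ ‖x - z‖ := by
  rw [EuclideanSpace.norm_eq, EuclideanSpace.norm_eq]
  gcongr with i
  simpa [boxProj] using abs_min_max_sub_le (a := x i) (hz i)

theorem stmt3_general (p : ℕ) (B₁ B₂ : ℝ)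
    (σ α : ℝ) (hα : 0 < α)
    (W : EuclideanSpace ℝ (Fin p) → ℝ) (hdiff : Differentiable ℝ W)
    (hconc : PaperStrongConcaveOn (box p B₁ B₂) σ W)
    (βstar : EuclideanSpace ℝ (Fin p)) (hβstar : βstar ∈ box p B₁ B₂)
    (hmax : ∀ b ∈ box p B₁ B₂, W b ≤ W βstar)
    (β : EuclideanSpace ℝ (Fin p)) (hβ : β ∈ box p B₁ B₂) :
    ‖boxProj p B₁ B₂ (β + α • gradient W β) - βstar‖ ^ 2
      ≤ (1 - 2 * σ * α) * ‖β - βstar‖ ^ 2 + α ^ 2 * ‖gradient W β‖ ^ 2 := by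
  have hstrong := hconc.strongConcaveOn (convex_box p B₁ B₂)
  have hcoercive := hstrong.mul_sq_norm_sub_le_inner_gradient_of_isMaxOn hβ hβstar (hdiff β) hmax
  calc ‖boxProj p B₁ B₂ (β + α • gradient W β) - βstar‖ ^ 2
      ≤ ‖β + α • gradient W β - βstar‖ ^ 2 := by gcongr; exact norm_boxProj_sub_le _ hβstar
    _ ≤ _ := norm_add_smul_sub_sq_le hα.le hcoercive

/-- **One-step contraction of projected gradient ascent under strong concavity.**
For `W` differentiable and `σ`-strongly concave on the box `[B₁,B₂]^p` with maximizer `β*`,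
any `β` in the box and step size `α > 0` satisfy
`‖P(β + α ∇W(β)) - β*‖² ≤ (1 - 2σα) ‖β - β*‖² + α² ‖∇W(β)‖²`. -/
theorem stmt3 (p : ℕ) (hp : 1 ≤ p) (B₁ B₂ : ℝ) (hB : B₁ < B₂)
    (σ α : ℝ) (hσ : 0 < σ) (hα : 0 < α)
    (W : EuclideanSpace ℝ (Fin p) → ℝ) (hdiff : Differentiable ℝ W)
    (hconc : PaperStrongConcaveOn (box p B₁ B₂) σ W)
    (βstar : EuclideanSpace ℝ (Fin p)) (hβstar : βstar ∈ box p B₁ B₂)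
    (hmax : ∀ b ∈ box p B₁ B₂, W b ≤ W βstar)
    (β : EuclideanSpace ℝ (Fin p)) (hβ : β ∈ box p B₁ B₂) :
    ‖boxProj p B₁ B₂ (β + α • gradient W β) - βstar‖ ^ 2
      ≤ (1 - 2 * σ * α) * ‖β - βstar‖ ^ 2 + α ^ 2 * ‖gradient W β‖ ^ 2 :=
  stmt3_general p B₁ B₂ σ α hα W hdiff hconc βstar hβstar hmax β hβ
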